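/- arXiv:2204.10426 — 3 statements merged into one kernel-verified Lean document; each statement's English description precedes it below -/
import Mathlib

section
/- Suppose Q(θ', θ) ≥ Q(θ, θ) for parameters θ, θ' ∈ Θ (and the integrals defining Q(θ', θ), Q(θ, θ) and the entropy terms ∫ (log (p i θ b)) · (p i θ b) dμ(b) are all finite). Then l_w(θ') ≥ l_w(θ); in particular, if at step k of the weighted EM algorithm θ^{(k+1)} maximizes the map θ ↦ Q(θ, θ^{(k)}), then the weighted observed-data likelihood satisfies L_w(θ^{(k+1)}) ≥ L_w(θ^{(k)}). -/
open MeasureTheory Real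

/-- Weighted EM ascent property: if `Q θ' θ ≥ Q θ θ` then the weighted
observed-data log-likelihood (and hence likelihood) does not decrease. -/
theorem weighted_EM_ascent
    {Θ : Type*} (μ : Measure ℝ) [SigmaFinite μ]
    (n : ℕ) (w : Fin n → ℝ) (hw : ∀ i, 0 ≤ w i)
    (g : Fin n → Θ → ℝ → ℝ)
    (hg_meas : ∀ i θ, Measurable (g i θ))
    (hg_pos : ∀ i θ b, 0 < g i θ b)
    (hg_int : ∀ i θ, Integrable (g i θ) μ)
    (Z : Fin n → Θ → ℝ) (hZ : ∀ i θ, Z i θ = ∫ b, g i θ b ∂μ)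
    (hZ_pos : ∀ i θ, 0 < Z i θ)
    (lw : Θ → ℝ) (hlw : ∀ θ, lw θ = ∑ i, w i * Real.log (Z i θ))
    (Lw : Θ → ℝ) (hLw : ∀ θ, Lw θ = ∏ i, (Z i θ) ^ (w i))
    (p : Fin n → Θ → ℝ → ℝ)
    (hp : ∀ i θ b, p i θ b = g i θ b / Z i θ)
    (Q : Θ → Θ → ℝ)
    (hQ : ∀ θ θt, Q θ θt = ∑ i, w i * ∫ b, Real.log (g i θ b) * p i θt b ∂μ)
    (θ θ' : Θ)
    -- finiteness of the integrals defining Q(θ', θ) and Q(θ, θ)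
    (hint1 : ∀ i, Integrable (fun b => Real.log (g i θ' b) * p i θ b) μ)
    (hint2 : ∀ i, Integrable (fun b => Real.log (g i θ b) * p i θ b) μ)
    -- finiteness of the entropy terms
    (hent : ∀ i, Integrable (fun b => Real.log (p i θ b) * p i θ b) μ)
    (hQQ : Q θ' θ ≥ Q θ θ) :
    lw θ' ≥ lw θ ∧ Lw θ' ≥ Lw θ := by
  -- p i t is integrable with integral 1
  have hpfun : ∀ (t : Θ) i, p i t = fun b => g i t b / Z i t := fun t i => funext (hp i t)
  have hpint : ∀ (t : Θ) i, Integrable (p i t) μ := by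
    intro t i
    rw [hpfun t i]
    exact (hg_int i t).div_const _
  have hpone : ∀ (t : Θ) i, ∫ b, p i t b ∂μ = 1 := by
    intro t i
    rw [hpfun t i]
    rw [integral_div, ← hZ]
    exact div_self (hZ_pos i t).ne'
  have hppos : ∀ (t : Θ) i b, 0 < p i t b := by
    intro t i b
    rw [hp]
    exact div_pos (hg_pos i t b) (hZ_pos i t)
  -- key per-observation inequality
  have key : ∀ i, (∫ b, Real.log (g i θ' b) * p i θ b ∂μ) -
      (∫ b, Real.log (g i θ b) * p i θ b ∂μ) ≤
      Real.log (Z i θ') - Real.log (Z i θ) := by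
    intro i
    set c : ℝ := Real.log (Z i θ') - Real.log (Z i θ) with hc
    -- LHS function and its integrability
    have hf : Integrable (fun b => Real.log (g i θ' b) * p i θ b -
        Real.log (g i θ b) * p i θ b - c * p i θ b) μ :=
      ((hint1 i).sub (hint2 i)).sub ((hpint θ i).const_mul c)
    have hsub : Integrable (fun b => p i θ' b - p i θ b) μ :=
      (hpint θ' i).sub (hpint θ i)
    -- pointwise: log(p'/p) * p ≤ p' - p
    have hpt : ∀ b, Real.log (g i θ' b) * p i θ b -
        Real.log (g i θ b) * p i θ b - c * p i θ b ≤ p i θ' b - p i θ b := by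
      intro b
      have hpb : 0 < p i θ b := hppos θ i b
      have hpb' : 0 < p i θ' b := hppos θ' i b
      have hx : 0 < p i θ' b / p i θ b := div_pos hpb' hpb
      have hlog := Real.log_le_sub_one_of_pos hx
      have hmul : Real.log (p i θ' b / p i θ b) * p i θ b ≤ p i θ' b - p i θ b := by
        have := mul_le_mul_of_nonneg_right hlog hpb.le
        calc Real.log (p i θ' b / p i θ b) * p i θ b
            ≤ (p i θ' b / p i θ b - 1) * p i θ b := this
          _ = p i θ' b - p i θ b := by field_simp
      have heq : Real.log (p i θ' b / p i θ b) =
          (Real.log (g i θ' b) - Real.log (Z i θ')) -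
          (Real.log (g i θ b) - Real.log (Z i θ)) := by
        rw [Real.log_div hpb'.ne' hpb.ne', hp, hp,
          Real.log_div (hg_pos i θ' b).ne' (hZ_pos i θ').ne',
          Real.log_div (hg_pos i θ b).ne' (hZ_pos i θ).ne']
      rw [heq] at hmul
      calc Real.log (g i θ' b) * p i θ b - Real.log (g i θ b) * p i θ b - c * p i θ b
          = ((Real.log (g i θ' b) - Real.log (Z i θ')) -
            (Real.log (g i θ b) - Real.log (Z i θ))) * p i θ b := by rw [hc]; ring
        _ ≤ p i θ' b - p i θ b := hmul
    have hmono := integral_mono hf hsub hpt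
    have hR : ∫ b, (p i θ' b - p i θ b) ∂μ = 0 := by
      rw [integral_sub (hpint θ' i) (hpint θ i), hpone, hpone]; ring
    have hL : ∫ b, (Real.log (g i θ' b) * p i θ b -
        Real.log (g i θ b) * p i θ b - c * p i θ b) ∂μ =
        (∫ b, Real.log (g i θ' b) * p i θ b ∂μ) -
        (∫ b, Real.log (g i θ b) * p i θ b ∂μ) - c := by
      have hf12 : Integrable (fun b => Real.log (g i θ' b) * p i θ b -
          Real.log (g i θ b) * p i θ b) μ := (hint1 i).sub (hint2 i)
      have hfc : Integrable (fun b => c * p i θ b) μ := (hpint θ i).const_mul c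
      rw [integral_sub hf12 hfc, integral_sub (hint1 i) (hint2 i),
        integral_const_mul, hpone, mul_one]
    rw [hL, hR] at hmono
    linarith
  -- sum the per-observation inequalities
  have hsum : Q θ' θ - Q θ θ ≤ lw θ' - lw θ := by
    rw [hQ, hQ, hlw, hlw, ← Finset.sum_sub_distrib, ← Finset.sum_sub_distrib]
    apply Finset.sum_le_sum
    intro i _
    have := key i
    have hwi := hw i
    nlinarith [mul_le_mul_of_nonneg_left (key i) (hw i)]
  have hlwge : lw θ' ≥ lw θ := by linarith [hsum, hQQ]
  refine ⟨hlwge, ?_⟩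
  -- Lw t = exp (lw t)
  have hexp : ∀ t, Lw t = Real.exp (lw t) := by
    intro t
    rw [hLw, hlw, Real.exp_sum]
    apply Finset.prod_congr rfl
    intro i _
    rw [Real.rpow_def_of_pos (hZ_pos i t), mul_comm]
  rw [hexp, hexp]
  exact Real.exp_le_exp.mpr hlwge
end

section
/- Let (θ^{(k)})_{k ∈ ℕ} be a sequence in Θ such that for every k, Q(θ^{(k+1)}, θ^{(k)}) ≥ Q(θ^{(k)}, θ^{(k)}) (for instance, θ^{(k+1)} maximizes θ ↦ Q(θ, θ^{(k)})), and assume for each k the integrals defining Q(θ^{(k+1)}, θ^{(k)}), Q(θ^{(k)}, θ^{(k)}) and the entropy terms ∫ (log (p i θ^{(k)} b)) · (p i θ^{(k)} b) dμ(b) are finite. Then the sequence (l_w(θ^{(k)}))_{k ∈ ℕ} is monotone nondecreasing; consequently, if it is bounded above, it converges (to its supremum). -/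
open MeasureTheory Real Filter

/-- Monotone convergence of the weighted EM algorithm: if each step does not
decrease `Q(·, θ^{(k)})` at the current iterate, then the weighted
observed-data log-likelihood sequence is nondecreasing, and converges to its
supremum whenever it is bounded above. -/
theorem weighted_EM_monotone_convergence
    {Θ : Type*} (μ : Measure ℝ) [SigmaFinite μ]
    (n : ℕ) (w : Fin n → ℝ) (hw : ∀ i, 0 ≤ w i)
    (g : Fin n → Θ → ℝ → ℝ)
    (hg_meas : ∀ i θ, Measurable (g i θ))
    (hg_pos : ∀ i θ b, 0 < g i θ b)
    (hg_int : ∀ i θ, Integrable (g i θ) μ)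
    (Z : Fin n → Θ → ℝ) (hZ : ∀ i θ, Z i θ = ∫ b, g i θ b ∂μ)
    (hZ_pos : ∀ i θ, 0 < Z i θ)
    (lw : Θ → ℝ) (hlw : ∀ θ, lw θ = ∑ i, w i * Real.log (Z i θ))
    (p : Fin n → Θ → ℝ → ℝ)
    (hp : ∀ i θ b, p i θ b = g i θ b / Z i θ)
    (Q : Θ → Θ → ℝ)
    (hQ : ∀ θ θt, Q θ θt = ∑ i, w i * ∫ b, Real.log (g i θ b) * p i θt b ∂μ)
    (θseq : ℕ → Θ)
    (hstep : ∀ k, Q (θseq (k + 1)) (θseq k) ≥ Q (θseq k) (θseq k))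
    -- finiteness of the integrals defining Q(θ^{(k+1)}, θ^{(k)}) and Q(θ^{(k)}, θ^{(k)})
    (hint1 : ∀ k i, Integrable (fun b => Real.log (g i (θseq (k + 1)) b) * p i (θseq k) b) μ)
    (hint2 : ∀ k i, Integrable (fun b => Real.log (g i (θseq k) b) * p i (θseq k) b) μ)
    -- finiteness of the entropy terms
    (hent : ∀ k i, Integrable (fun b => Real.log (p i (θseq k) b) * p i (θseq k) b) μ) :
    Monotone (fun k => lw (θseq k)) ∧
      (BddAbove (Set.range fun k => lw (θseq k)) →
        Tendsto (fun k => lw (θseq k)) atTop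
          (nhds (sSup (Set.range fun k => lw (θseq k))))) := by
  have hZne : ∀ i θ, Z i θ ≠ 0 := fun i θ => (hZ_pos i θ).ne'
  have hp_fun : ∀ i θ, (fun b => p i θ b) = fun b => g i θ b / Z i θ := by
    intro i θ; funext b; exact hp i θ b
  have hp_int : ∀ i θ, Integrable (fun b => p i θ b) μ := by
    intro i θ; rw [hp_fun]; exact (hg_int i θ).div_const _
  have hp_pos : ∀ i θ b, 0 < p i θ b := by
    intro i θ b; rw [hp]; exact div_pos (hg_pos i θ b) (hZ_pos i θ)
  have hp_integral : ∀ i θ, ∫ b, p i θ b ∂μ = 1 := by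
    intro i θ
    simp only [hp_fun, integral_div, ← hZ, div_self (hZne i θ)]
  have hlogp : ∀ i θ b, Real.log (p i θ b) = Real.log (g i θ b) - Real.log (Z i θ) := by
    intro i θ b; rw [hp, Real.log_div (hg_pos i θ b).ne' (hZne i θ)]
  -- integrability of log p θ' * p_k
  have hint1' : ∀ k i,
      Integrable (fun b => Real.log (p i (θseq (k + 1)) b) * p i (θseq k) b) μ := by
    intro k i
    have heq : (fun b => Real.log (p i (θseq (k + 1)) b) * p i (θseq k) b)
        = fun b => Real.log (g i (θseq (k + 1)) b) * p i (θseq k) b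
          - Real.log (Z i (θseq (k + 1))) * p i (θseq k) b := by
      funext b; rw [hlogp]; ring
    rw [heq]
    exact (hint1 k i).sub ((hp_int i (θseq k)).const_mul _)
  -- key per-step inequality
  have key : ∀ k, lw (θseq k) ≤ lw (θseq (k + 1)) := by
    intro k
    set θk := θseq k with hθk
    set θ' := θseq (k + 1) with hθ'
    -- per observation: E-step gap is dominated by the log-likelihood gap
    have main : ∀ i : Fin n,
        (∫ b, Real.log (g i θ' b) * p i θk b ∂μ)
          - (∫ b, Real.log (g i θk b) * p i θk b ∂μ)
        ≤ Real.log (Z i θ') - Real.log (Z i θk) := by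
      intro i
      -- entropy comparison: ∫ (log p' - log pk) pk ≤ 0
      have hptw : ∀ b,
          (Real.log (p i θ' b) - Real.log (p i θk b)) * p i θk b
            ≤ p i θ' b - p i θk b := by
        intro b
        have h1 : Real.log (p i θ' b) - Real.log (p i θk b)
            = Real.log (p i θ' b / p i θk b) := by
          rw [Real.log_div (hp_pos i θ' b).ne' (hp_pos i θk b).ne']
        have h2 : Real.log (p i θ' b / p i θk b) ≤ p i θ' b / p i θk b - 1 :=
          Real.log_le_sub_one_of_pos (div_pos (hp_pos i θ' b) (hp_pos i θk b))
        have h3 : (p i θ' b / p i θk b - 1) * p i θk b = p i θ' b - p i θk b := by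
          field_simp [(hp_pos i θk b).ne']
        calc (Real.log (p i θ' b) - Real.log (p i θk b)) * p i θk b
            ≤ (p i θ' b / p i θk b - 1) * p i θk b := by
              rw [h1]; exact mul_le_mul_of_nonneg_right h2 (hp_pos i θk b).le
          _ = p i θ' b - p i θk b := h3
      have hLint : Integrable
          (fun b => (Real.log (p i θ' b) - Real.log (p i θk b)) * p i θk b) μ := by
        have heq : (fun b => (Real.log (p i θ' b) - Real.log (p i θk b)) * p i θk b)
            = fun b => Real.log (p i θ' b) * p i θk b
              - Real.log (p i θk b) * p i θk b := by
          funext b; ring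
        rw [heq]
        exact (hint1' k i).sub (hent k i)
      have hRint : Integrable (fun b => p i θ' b - p i θk b) μ :=
        (hp_int i θ').sub (hp_int i θk)
      have hent_le : ∫ b, (Real.log (p i θ' b) - Real.log (p i θk b)) * p i θk b ∂μ ≤ 0 := by
        calc ∫ b, (Real.log (p i θ' b) - Real.log (p i θk b)) * p i θk b ∂μ
            ≤ ∫ b, (p i θ' b - p i θk b) ∂μ := integral_mono hLint hRint hptw
          _ = 0 := by
              rw [integral_sub (hp_int i θ') (hp_int i θk), hp_integral, hp_integral]
              ring
      -- express log Z in terms of the Q-integrand and the entropy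
      have hsplit : ∀ (θ : Θ)
          (hI : Integrable (fun b => Real.log (g i θ b) * p i θk b) μ),
          ∫ b, Real.log (p i θ b) * p i θk b ∂μ
            = (∫ b, Real.log (g i θ b) * p i θk b ∂μ) - Real.log (Z i θ) := by
        intro θ hI
        have heq : (fun b => Real.log (p i θ b) * p i θk b)
            = fun b => Real.log (g i θ b) * p i θk b
              - Real.log (Z i θ) * p i θk b := by
          funext b; rw [hlogp]; ring
        rw [heq, integral_sub hI ((hp_int i θk).const_mul _), integral_const_mul,
          hp_integral, mul_one]
      have h1 := hsplit θ' (hint1 k i)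
      have h2 := hsplit θk (hint2 k i)
      have hdiff : ∫ b, (Real.log (p i θ' b) - Real.log (p i θk b)) * p i θk b ∂μ
          = (∫ b, Real.log (p i θ' b) * p i θk b ∂μ)
            - ∫ b, Real.log (p i θk b) * p i θk b ∂μ := by
        have heq : (fun b => (Real.log (p i θ' b) - Real.log (p i θk b)) * p i θk b)
            = fun b => Real.log (p i θ' b) * p i θk b
              - Real.log (p i θk b) * p i θk b := by
          funext b; ring
        rw [heq, integral_sub (hint1' k i) (hent k i)]
      rw [hdiff, h1, h2] at hent_le
      linarith
    -- sum up with weights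
    have hsum : Q θ' θk - Q θk θk ≤ lw θ' - lw θk := by
      rw [hQ, hQ, hlw, hlw, ← Finset.sum_sub_distrib, ← Finset.sum_sub_distrib]
      apply Finset.sum_le_sum
      intro i _
      have := main i
      calc w i * (∫ b, Real.log (g i θ' b) * p i θk b ∂μ)
            - w i * ∫ b, Real.log (g i θk b) * p i θk b ∂μ
          = w i * ((∫ b, Real.log (g i θ' b) * p i θk b ∂μ)
              - ∫ b, Real.log (g i θk b) * p i θk b ∂μ) := by ring
        _ ≤ w i * (Real.log (Z i θ') - Real.log (Z i θk)) :=
            mul_le_mul_of_nonneg_left (main i) (hw i)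
        _ = w i * Real.log (Z i θ') - w i * Real.log (Z i θk) := by ring
    have hQk := hstep k
    linarith
  have hmono : Monotone (fun k => lw (θseq k)) := monotone_nat_of_le_succ key
  refine ⟨hmono, fun hb => ?_⟩
  exact tendsto_atTop_ciSup hmono hb
end

section
/- Let λ : ℝ → ℝ be continuous with λ(t) ≥ 0 for t ≥ 0, set Λ(t) := ∫₀ᵗ λ(u) du, and assume Λ(t) → ∞ as t → ∞. Then for all a > 0 and c > 0, ∫₀^∞ c·λ(t)·exp(−(a + c)·Λ(t)) dt = c/(a + c). (With a = e^{β₁ z + b}, c = e^{β₂ z + b} and common baseline intensity λ₀₁ = λ₀₂ = λ, this shows P(T₁ = ∞ | b) = ∫₀^∞ f_∞(t | b) dt = e^{β₂ z}/(e^{β₁ z} + e^{β₂ z}), the probability that the terminal event occurs without the non-terminal event, which notably does not depend on the frailty b.) -/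
open MeasureTheory Real Filter Set intervalIntegral

/-- For a nonnegative continuous intensity `λ` with cumulative `Λ(t) = ∫₀ᵗ λ`
diverging to `∞`, and any `a, c > 0`:
`∫₀^∞ c·λ(t)·exp(−(a + c)·Λ(t)) dt = c/(a + c)`, i.e. the probability
`P(T₁ = ∞ | b)` that the terminal event occurs without the non-terminal event
equals `e^{β₂ z}/(e^{β₁ z} + e^{β₂ z})`, free of the frailty `b`. -/
theorem prob_terminal_without_nonterminal
    (lam : ℝ → ℝ) (hlam : Continuous lam)
    (hlam_nonneg : ∀ t : ℝ, 0 ≤ t → 0 ≤ lam t)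
    (Lam : ℝ → ℝ) (hLam : ∀ t : ℝ, Lam t = ∫ u in (0 : ℝ)..t, lam u)
    (hdiv : Tendsto Lam atTop atTop) :
    ∀ a c : ℝ, 0 < a → 0 < c →
      ∫ t in Ici (0 : ℝ), c * lam t * Real.exp (-(a + c) * Lam t) = c / (a + c) := by
  intro a c ha hc
  have hac : 0 < a + c := by linarith
  set F : ℝ → ℝ := fun t => -(c / (a + c)) * Real.exp (-(a + c) * Lam t) with hF
  -- Lam has derivative lam
  have hLamderiv : ∀ x : ℝ, HasDerivAt Lam (lam x) x := by
    intro x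
    have := intervalIntegral.integral_hasDerivAt_right
      (hlam.intervalIntegrable (0 : ℝ) x)
      (hlam.stronglyMeasurableAtFilter _ _) hlam.continuousAt
    exact this.congr_of_eventuallyEq (Filter.Eventually.of_forall fun t => hLam t)
  have hFd : ∀ x : ℝ, HasDerivAt F (c * lam x * Real.exp (-(a + c) * Lam x)) x := by
    intro x
    have h1 : HasDerivAt (fun t => -(a + c) * Lam t) (-(a + c) * lam x) x :=
      (hLamderiv x).const_mul _
    have h2 : HasDerivAt (fun t => Real.exp (-(a + c) * Lam t))
        (Real.exp (-(a + c) * Lam x) * (-(a + c) * lam x)) x := h1.exp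
    have h3 := h2.const_mul (-(c / (a + c)))
    convert h3 using 1
    rfl
    rfl
    field_simp
  have hLam0 : Lam 0 = 0 := by simp [hLam 0]
  have hFlim : Tendsto F atTop (nhds 0) := by
    have : Tendsto (fun t => Real.exp (-(a + c) * Lam t)) atTop (nhds 0) := by
      have h1 : Tendsto (fun t => -(a + c) * Lam t) atTop atBot :=
        (tendsto_const_mul_atBot_of_neg (by linarith)).2 hdiv
      exact Real.tendsto_exp_atBot.comp h1
    have h2 := this.const_mul (-(c / (a + c)))
    rw [hF]
    simpa using h2
  have key : ∫ t in Ioi (0 : ℝ), c * lam t * Real.exp (-(a + c) * Lam t)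
      = 0 - F 0 := by
    apply integral_Ioi_of_hasDerivAt_of_nonneg
    · exact (hFd 0).continuousAt.continuousWithinAt
    · intro x hx; exact hFd x
    · intro x hx
      have : 0 ≤ lam x := hlam_nonneg x (le_of_lt hx)
      positivity
    · exact hFlim
  have hIci : ∫ t in Ici (0 : ℝ), c * lam t * Real.exp (-(a + c) * Lam t)
      = ∫ t in Ioi (0 : ℝ), c * lam t * Real.exp (-(a + c) * Lam t) :=
    integral_Ici_eq_integral_Ioi
  rw [hIci, key, hF]
  simp [hLam0]
end
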